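/- Let (r(t),p(t)) be any solution of the disordered harmonic chain dynamics. Define r'_x(t) = p_{x+1}(t)/m_{x+1} − p_x(t)/m_x for 1 ≤ x ≤ N−1 and p'_x(t) = r_x(t) − r_{x−1}(t) for 1 ≤ x ≤ N (with the conventions r_0 = r_N = 0 and r'_0 = r'_N = 0). Then t ↦ (r'(t),p'(t)) is again a solution of the same dynamics, and consequently the quantity I(r,p) = (1/2)[ Σ_{x=1}^N (r_x − r_{x−1})²/m_x + Σ_{x=1}^{N−1} (p_{x+1}/m_{x+1} − p_x/m_x)² ] is constant along every solution. -/

import Mathlib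

/-!
The quantity `I(r, p)` is the energy `H = (1/2)[Σ p_x²/m_x + Σ r_x²]` of the gradient
configuration `(r', p')`. Since `(r', p')` again solves the dynamics, it suffices that `H` is
conserved along every solution:
`dH/dt = Σ (p_x/m_x)(r_x − r_{x−1}) + Σ r_x (p_{x+1}/m_{x+1} − p_x/m_x)`,
which a summation by parts reduces to the boundary term `r_N p_N/m_N − r_0 p_1/m_1 = 0`.
-/

open Finset

/-- The disordered harmonic chain dynamics on `{1,…,N}`: `r` has components `1 ≤ x ≤ N-1`
(with the convention `r_0 = r_N = 0`) and `p` has components `1 ≤ x ≤ N`. -/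
def IsChainSolution (N : ℕ) (m : ℕ → ℝ) (r p : ℝ → ℕ → ℝ) : Prop :=
  (∀ t : ℝ, r t 0 = 0) ∧ (∀ t : ℝ, r t N = 0) ∧
  (∀ (t : ℝ) (x : ℕ), 1 ≤ x → x ≤ N - 1 →
    HasDerivAt (fun s => r s x) (p t (x + 1) / m (x + 1) - p t x / m x) t) ∧
  (∀ (t : ℝ) (x : ℕ), 1 ≤ x → x ≤ N →
    HasDerivAt (fun s => p s x) (r t x - r t (x - 1)) t)

/-- The conserved quantity
`I(r,p) = (1/2)[ Σ_{x=1}^N (r_x − r_{x−1})²/m_x + Σ_{x=1}^{N−1} (p_{x+1}/m_{x+1} − p_x/m_x)² ]`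
(with the conventions `r_0 = r_N = 0`, which hold for configurations coming from the dynamics). -/
noncomputable def chainI (N : ℕ) (m : ℕ → ℝ) (r p : ℕ → ℝ) : ℝ :=
  (1 / 2) * ((∑ x ∈ Finset.Icc 1 N, (r x - r (x - 1)) ^ 2 / m x)
    + ∑ x ∈ Finset.Icc 1 (N - 1), (p (x + 1) / m (x + 1) - p x / m x) ^ 2)

theorem sum_Icc_mul_sub_add_sum_Icc_mul_sub {R : Type*} [CommRing R] (a b : ℕ → R) (n : ℕ) :
    (∑ x ∈ Icc 1 (n + 1), b x * (a x - a (x - 1))) + ∑ x ∈ Icc 1 n, a x * (b (x + 1) - b x)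
      = a (n + 1) * b (n + 1) - a 0 * b 1 := by
  induction n with
  | zero => simp [mul_sub, mul_comm]
  | succ n ih =>
    rw [sum_Icc_succ_top (by omega) (fun x => b x * (a x - a (x - 1))),
      sum_Icc_succ_top (by omega) (fun x => a x * (b (x + 1) - b x)), Nat.add_sub_cancel]
    linear_combination ih

theorem sum_Icc_mul_sub_add_sum_Icc_mul_sub_eq_zero {R : Type*} [CommRing R] (a b : ℕ → R)
    (n : ℕ) (h0 : a 0 = 0) (hn : a n = 0) :
    (∑ x ∈ Icc 1 n, b x * (a x - a (x - 1))) + ∑ x ∈ Icc 1 (n - 1), a x * (b (x + 1) - b x)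
      = 0 := by
  cases n with
  | zero => simp
  | succ n => rw [Nat.add_sub_cancel, sum_Icc_mul_sub_add_sum_Icc_mul_sub, h0, hn]; ring

noncomputable def chainEnergy (N : ℕ) (m : ℕ → ℝ) (r p : ℕ → ℝ) : ℝ :=
  (1 / 2) * ((∑ x ∈ Icc 1 N, p x ^ 2 / m x) + ∑ x ∈ Icc 1 (N - 1), r x ^ 2)

noncomputable def chainGradR (N : ℕ) (m : ℕ → ℝ) (p : ℕ → ℝ) (x : ℕ) : ℝ :=
  if x = 0 ∨ x = N then 0 else p (x + 1) / m (x + 1) - p x / m x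

def chainGradP (r : ℕ → ℝ) (x : ℕ) : ℝ := r x - r (x - 1)

theorem chainGradR_of_mem_Icc {N x : ℕ} (m p : ℕ → ℝ) (hx : x ∈ Icc 1 (N - 1)) :
    chainGradR N m p x = p (x + 1) / m (x + 1) - p x / m x := by
  rw [mem_Icc] at hx
  exact if_neg (by omega)

theorem chainI_eq_chainEnergy_chainGrad (N : ℕ) (m r p : ℕ → ℝ) :
    chainI N m r p = chainEnergy N m (chainGradR N m p) (chainGradP r) := by
  unfold chainI chainEnergy chainGradP
  congr 2
  exact sum_congr rfl fun x hx => by rw [chainGradR_of_mem_Icc m p hx]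

namespace IsChainSolution

variable {N : ℕ} {m : ℕ → ℝ} {r p : ℝ → ℕ → ℝ}

theorem hasDerivAt_r_of_le (h : IsChainSolution N m r p) (t : ℝ) {x : ℕ} (hx : x ≤ N) :
    HasDerivAt (fun s => r s x) (chainGradR N m (p t) x) t := by
  obtain ⟨h0, hN, hr, -⟩ := h
  unfold chainGradR
  split_ifs with hb
  · obtain rfl | rfl := hb
    · simpa only [h0] using hasDerivAt_const t (0 : ℝ)
    · simpa only [hN] using hasDerivAt_const t (0 : ℝ)
  · exact hr t x (by omega) (by omega)

theorem grad (h : IsChainSolution N m r p) :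
    IsChainSolution N m (fun t => chainGradR N m (p t)) (fun t => chainGradP (r t)) := by
  have hp := h.2.2.2
  refine ⟨fun t => if_pos (.inl rfl), fun t => if_pos (.inr rfl), fun t x h1 h2 => ?_,
    fun t x h1 h2 => (h.hasDerivAt_r_of_le t h2).sub (h.hasDerivAt_r_of_le t (by omega))⟩
  have hx : x ∈ Icc 1 (N - 1) := mem_Icc.2 ⟨h1, h2⟩
  simp only [chainGradR_of_mem_Icc m _ hx]
  exact ((hp t (x + 1) (by omega) (by omega)).div_const _).sub ((hp t x h1 (by omega)).div_const _)

theorem hasDerivAt_chainEnergy (h : IsChainSolution N m r p) (t : ℝ) :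
    HasDerivAt (fun s => chainEnergy N m (r s) (p s)) 0 t := by
  obtain ⟨h0, hN, hr, hp⟩ := h
  have hkin : HasDerivAt (fun s => ∑ x ∈ Icc 1 N, p s x ^ 2 / m x)
      (∑ x ∈ Icc 1 N, 2 * (p t x / m x * (r t x - r t (x - 1)))) t :=
    HasDerivAt.fun_sum fun x hx =>
      (((hp t x (mem_Icc.1 hx).1 (mem_Icc.1 hx).2).fun_pow 2).div_const (m x)).congr_deriv
        (by ring)
  have hpot : HasDerivAt (fun s => ∑ x ∈ Icc 1 (N - 1), r s x ^ 2)
      (∑ x ∈ Icc 1 (N - 1), 2 * (r t x * (p t (x + 1) / m (x + 1) - p t x / m x))) t :=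
    HasDerivAt.fun_sum fun x hx =>
      ((hr t x (mem_Icc.1 hx).1 (mem_Icc.1 hx).2).fun_pow 2).congr_deriv (by ring)
  have h := (hkin.add hpot).const_mul (1 / 2 : ℝ)
  rwa [← mul_sum, ← mul_sum, ← mul_add, sum_Icc_mul_sub_add_sum_Icc_mul_sub_eq_zero (r t)
    (fun x => p t x / m x) N (h0 t) (hN t), mul_zero, mul_zero] at h

theorem chainEnergy_eq (h : IsChainSolution N m r p) (t s : ℝ) :
    chainEnergy N m (r t) (p t) = chainEnergy N m (r s) (p s) :=
  is_const_of_deriv_eq_zero (fun u => (h.hasDerivAt_chainEnergy u).differentiableAt)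
    (fun u => (h.hasDerivAt_chainEnergy u).deriv) t s

end IsChainSolution

theorem stmt0_general (N : ℕ) (m : ℕ → ℝ)
    (r p : ℝ → ℕ → ℝ) (hsol : IsChainSolution N m r p)
    (r' p' : ℝ → ℕ → ℝ)
    (hr' : ∀ (t : ℝ) (x : ℕ), r' t x =
      if x = 0 ∨ x = N then 0 else p t (x + 1) / m (x + 1) - p t x / m x)
    (hp' : ∀ (t : ℝ) (x : ℕ), p' t x = r t x - r t (x - 1)) :
    IsChainSolution N m r' p' ∧
      ∀ t s : ℝ, chainI N m (r t) (p t) = chainI N m (r s) (p s) := by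
  obtain rfl : r' = fun t => chainGradR N m (p t) := funext fun t => funext (hr' t)
  obtain rfl : p' = fun t => chainGradP (r t) := funext fun t => funext (hp' t)
  refine ⟨hsol.grad, fun t s => ?_⟩
  simpa only [chainI_eq_chainEnergy_chainGrad] using hsol.grad.chainEnergy_eq t s

/-- if `(r,p)` solves the disordered harmonic chain dynamics, then the gradient
fields `r'_x = p_{x+1}/m_{x+1} − p_x/m_x` (with `r'_0 = r'_N = 0`) and `p'_x = r_x − r_{x−1}`
again solve the same dynamics, and consequently `I(r(t),p(t))` is constant along every
solution. -/
theorem stmt0 (N : ℕ) (hN : 2 ≤ N) (m : ℕ → ℝ) (hm : ∀ x, 0 < m x)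
    (r p : ℝ → ℕ → ℝ) (hsol : IsChainSolution N m r p)
    (r' p' : ℝ → ℕ → ℝ)
    (hr' : ∀ (t : ℝ) (x : ℕ), r' t x =
      if x = 0 ∨ x = N then 0 else p t (x + 1) / m (x + 1) - p t x / m x)
    (hp' : ∀ (t : ℝ) (x : ℕ), p' t x = r t x - r t (x - 1)) :
    IsChainSolution N m r' p' ∧
      ∀ t s : ℝ, chainI N m (r t) (p t) = chainI N m (r s) (p s) :=
  stmt0_general N m r p hsol r' p' hr' hp'
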